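/- Let P be a simple polytope of dimension d > 1, and let u, v be vertices of P that lie on exactly one common facet F. Then there is precisely one vertex x of P adjacent to v with x ∉ F, and for this x the vertices u and x have at most one facet of P in common; moreover, no single facet of P contains all three vertices u, v, x. -/

import Mathlib

/-- `P` is a polytope: the convex hull of finitely many points. -/
def IsPolytope {n : ℕ} (P : Set (Fin n → ℝ)) : Prop :=
  ∃ S : Finset (Fin n → ℝ), P = convexHull ℝ (S : Set (Fin n → ℝ))

/-- A face of `P`: the empty set, `P` itself, or the intersection of `P`
with a supporting hyperplane. -/
def IsFace {n : ℕ} (P F : Set (Fin n → ℝ)) : Prop :=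
  F = ∅ ∨ F = P ∨ ∃ (f : (Fin n → ℝ) →ₗ[ℝ] ℝ) (c : ℝ),
    (∀ x ∈ P, f x ≤ c) ∧ F = {x ∈ P | f x = c}

/-- The dimension of a subset of `ℝⁿ`: the rank of its vector span
(i.e., its affine dimension). -/
noncomputable def sdim {n : ℕ} (F : Set (Fin n → ℝ)) : ℕ :=
  Module.finrank ℝ ↥(vectorSpan ℝ F)

/-- A vertex of `P`: a point whose singleton is a (0-dimensional) face of `P`. -/
def IsVertex {n : ℕ} (P : Set (Fin n → ℝ)) (v : Fin n → ℝ) : Prop :=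
  IsFace P {v}

/-- A facet of `P`: a nonempty face of dimension `dim P - 1`. -/
def IsFacet {n : ℕ} (P F : Set (Fin n → ℝ)) : Prop :=
  IsFace P F ∧ F.Nonempty ∧ sdim F + 1 = sdim P

/-- An edge of `P`: a face of dimension 1. -/
def IsEdge {n : ℕ} (P F : Set (Fin n → ℝ)) : Prop :=
  IsFace P F ∧ sdim F = 1

/-- Two vertices are adjacent if they are joined by an edge. -/
def Adjacent {n : ℕ} (P : Set (Fin n → ℝ)) (u v : Fin n → ℝ) : Prop :=
  u ≠ v ∧ ∃ F, IsEdge P F ∧ u ∈ F ∧ v ∈ F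

/-- A polytope is simple if every vertex belongs to precisely `dim P` facets. -/
def IsSimplePolytope {n : ℕ} (P : Set (Fin n → ℝ)) : Prop :=
  ∀ v, IsVertex P v → {F | IsFacet P F ∧ v ∈ F}.ncard = sdim P

/-- A polytope is simplicial if every facet contains precisely `dim P` vertices. -/
def IsSimplicialPolytope {n : ℕ} (P : Set (Fin n → ℝ)) : Prop :=
  ∀ F, IsFacet P F → {v | IsVertex P v ∧ v ∈ F}.ncard = sdim P

/-- Two vertices are complementary if no facet contains both. -/
def Complementary {n : ℕ} (P : Set (Fin n → ℝ)) (u v : Fin n → ℝ) : Prop :=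
  ∀ F, IsFacet P F → ¬ (u ∈ F ∧ v ∈ F)

/-- `J` is the join `F ∨ G`: the smallest face of `P` containing both `F` and `G`. -/
def IsJoin {n : ℕ} (P F G J : Set (Fin n → ℝ)) : Prop :=
  IsFace P J ∧ F ⊆ J ∧ G ⊆ J ∧ ∀ J', IsFace P J' → F ⊆ J' → G ⊆ J' → J ⊆ J'


/-!
The vertex figure of `P` at a vertex `v` (the convex hull of the points where the rays from `v`
through the other vertices meet a hyperplane cutting off `v`) is a polytope of one dimension less,
whose faces correspond to the faces of `P` through `v`: facets to facets, vertices to edges.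
Induction on the dimension through vertex figures shows that every vertex lies on at least `dim P`
facets and is the only point of `P` lying on all of them.

Since `P` is simple, its vertex figure at `v` is a `(d - 1)`-polytope with exactly `d` facets, so
it behaves like a simplex: every vertex lies on all facets but one, and off each facet lies exactly
one vertex. Off the facet coming from `F` lies the vertex coming from the unique edge at `v` that
leaves `F`; its other endpoint is `x`. The same count shows that every edge lies on `d - 1` facets.
The `d - 1` facets through the edge `vx` all contain `v`, and a facet through `u` and `v` is `F`,
which misses `x`; so at most one of the `d` facets through `x` contains `u`.
-/

open Set Filter Topology

section Convex

variable {E : Type*} [AddCommGroup E] [Module ℝ E]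

theorem LinearMap.le_of_mem_convexHull {s : Set E} {f : E →ₗ[ℝ] ℝ} {c : ℝ}
    (hf : ∀ x ∈ s, f x ≤ c) {x : E} (hx : x ∈ convexHull ℝ s) : f x ≤ c :=
  convexHull_min hf (convex_halfSpace_le f.isLinear c) hx

theorem sep_convexHull_eq_convexHull_sep {s : Set E} {f : E →ₗ[ℝ] ℝ} {c : ℝ}
    (hf : ∀ x ∈ s, f x ≤ c) :
    {x ∈ convexHull ℝ s | f x = c} = convexHull ℝ {x ∈ s | f x = c} := by
  refine Subset.antisymm ?_ (subset_inter (convexHull_mono (sep_subset _ _))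
    (convexHull_min (fun x hx => hx.2) (convex_hyperplane f.isLinear c)))
  rintro x ⟨hx, hfx⟩
  rw [convexHull_eq_union_convexHull_finite_subsets, mem_iUnion₂] at hx
  obtain ⟨t, hts, hx⟩ := hx
  obtain ⟨w, hw₀, hw₁, rfl⟩ := Finset.mem_convexHull'.1 hx
  have hzero : ∀ y ∈ t, w y * (c - f y) = 0 := by
    refine (Finset.sum_eq_zero_iff_of_nonneg fun y hy =>
      mul_nonneg (hw₀ y hy) (sub_nonneg.2 (hf y (hts hy)))).1 ?_
    simp only [map_sum, map_smul, smul_eq_mul] at hfx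
    simp only [mul_sub, Finset.sum_sub_distrib, ← Finset.sum_mul, hw₁, one_mul, hfx, sub_self]
  have hw : ∀ y ∈ t, w y ≠ 0 → f y = c := fun y hy hwy =>
    (sub_eq_zero.1 ((mul_eq_zero.1 (hzero y hy)).resolve_left hwy)).symm
  have hw' : ∀ y ∈ t, w y • y ≠ 0 → f y = c := fun y hy hwy =>
    hw y hy (left_ne_zero_of_smul hwy)
  refine convexHull_mono (fun y hy => ?_) (Finset.mem_convexHull'.2 ⟨w, fun y hy => hw₀ y
    (Finset.mem_filter.1 hy).1, by rwa [Finset.sum_filter_of_ne hw], Finset.sum_filter_of_ne hw'⟩)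
  obtain ⟨hyt, hfy⟩ := Finset.mem_filter.1 hy
  exact ⟨hts hyt, hfy⟩

theorem Finset.exists_pos_forall_add_mul_neg {ι : Type*} (U : Finset ι) {a : ι → ℝ}
    (b : ι → ℝ) (ha : ∀ i ∈ U, a i < 0) : ∃ ε > 0, ∀ i ∈ U, a i + ε * b i < 0 := by
  have hev : ∀ᶠ ε in 𝓝 (0 : ℝ), ∀ i ∈ U, a i + ε * b i < 0 :=
    (eventually_all_finset U).2 fun i hi =>
      ((continuous_const.add (continuous_id.mul continuous_const)).tendsto' 0 (a i)
        (by simp)).eventually (gt_mem_nhds (ha i hi))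
  obtain ⟨ε, hε, hε0⟩ := ((hev.filter_mono nhdsWithin_le_nhds).and
    (self_mem_nhdsWithin : ∀ᶠ ε in 𝓝[>] (0 : ℝ), 0 < ε)).exists
  exact ⟨ε, hε0, hε⟩

theorem add_smul_eq_of_mem_extremePoints {A : Set E} {v y : E} {s t : ℝ} (hv : v ∈ A)
    (hs : v + s • y ∈ A.extremePoints ℝ) (ht : v + t • y ∈ A.extremePoints ℝ)
    (hs₀ : 0 < s) (ht₀ : 0 < t) : v + s • y = v + t • y := by
  wlog hst : s < t generalizing s t
  · rcases (not_lt.1 hst).eq_or_lt with rfl | hts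
    · rfl
    · exact (this ht hs ht₀ hs₀ hts).symm
  have hseg : v + s • y ∈ openSegment ℝ v (v + t • y) :=
    ⟨1 - s / t, s / t, by rw [sub_pos, div_lt_one ht₀]; exact hst, div_pos hs₀ ht₀, by ring,
      by rw [smul_add, smul_smul, div_mul_cancel₀ s ht₀.ne', ← add_assoc, ← add_smul]; simp⟩
  have hy : s • y = 0 := by
    simpa using ((mem_extremePoints.1 hs).2 v hv _ (extremePoints_subset ht) hseg).1
  rw [(smul_eq_zero.1 hy).resolve_left hs₀.ne']
  simp

end Convex

section Faces

variable {n : ℕ} {P G W s : Set (Fin n → ℝ)} {v : Fin n → ℝ}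

theorem isFace_iff : IsFace P G ↔ ∃ (f : (Fin n → ℝ) →ₗ[ℝ] ℝ) (c : ℝ),
    (∀ x ∈ P, f x ≤ c) ∧ G = {x ∈ P | f x = c} := by
  refine ⟨?_, fun h => Or.inr (Or.inr h)⟩
  rintro (rfl | rfl | h)
  · exact ⟨0, 1, fun _ _ => zero_le_one, by ext; simp⟩
  · exact ⟨0, 0, fun _ _ => le_rfl, by ext; simp⟩
  · exact h

theorem isFace_self (P : Set (Fin n → ℝ)) : IsFace P P := Or.inr (Or.inl rfl)

theorem IsFace.subset (h : IsFace P G) : G ⊆ P := by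
  obtain ⟨f, c, -, rfl⟩ := isFace_iff.1 h
  exact sep_subset _ _

theorem IsFace.inter (hG : IsFace P G) (hW : IsFace P W) : IsFace P (G ∩ W) := by
  obtain ⟨f, c, hf, rfl⟩ := isFace_iff.1 hG
  obtain ⟨h, m, hh, rfl⟩ := isFace_iff.1 hW
  refine isFace_iff.2 ⟨f + h, c + m, fun x hx => by simpa using add_le_add (hf x hx) (hh x hx), ?_⟩
  ext x
  simp only [mem_inter_iff, mem_ofPred_eq, LinearMap.add_apply]
  constructor
  · rintro ⟨⟨hx, hfx⟩, -, hhx⟩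
    exact ⟨hx, by rw [hfx, hhx]⟩
  · rintro ⟨hx, hfhx⟩
    have := hf x hx
    have := hh x hx
    exact ⟨⟨hx, by linarith⟩, hx, by linarith⟩

theorem IsFace.sInter {A : Set (Set (Fin n → ℝ))} (hA : A.Finite) (hA₀ : A.Nonempty)
    (hface : ∀ G ∈ A, IsFace P G) : IsFace P (⋂₀ A) := by
  obtain ⟨G₀, hG₀⟩ := hA₀
  have hP : IsFace P (P ∩ ⋂₀ A) := by
    clear hG₀
    induction A, hA using Set.Finite.induction_on with
    | empty => simpa using isFace_self P
    | @insert G A _ _ ih =>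
      rw [sInter_insert, inter_left_comm]
      exact (hface G (mem_insert G A)).inter (ih fun G' hG' => hface G' (mem_insert_of_mem G hG'))
  rwa [inter_eq_right.2 fun x hx => (hface G₀ hG₀).subset (mem_sInter.1 hx G₀ hG₀)] at hP

theorem IsVertex.mem (h : IsVertex P v) : v ∈ P := IsFace.subset h rfl

theorem IsFace.eq_convexHull_inter (hs : P = convexHull ℝ s) (hG : IsFace P G) :
    G = convexHull ℝ (s ∩ G) := by
  subst hs
  obtain ⟨f, c, hf, rfl⟩ := isFace_iff.1 hG
  refine (sep_convexHull_eq_convexHull_sep fun x hx => hf x (subset_convexHull ℝ _ hx)).trans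
    (congrArg (convexHull ℝ) (ext fun x => ?_))
  exact ⟨fun ⟨hx, hfx⟩ => ⟨hx, subset_convexHull ℝ _ hx, hfx⟩, fun ⟨hx, _, hfx⟩ => ⟨hx, hfx⟩⟩

theorem IsVertex.mem_of_eq_convexHull (hs : P = convexHull ℝ s) (hv : IsVertex P v) :
    v ∈ s := by
  by_contra hvs
  have h := IsFace.eq_convexHull_inter hs hv
  rw [inter_singleton_eq_empty.2 hvs, convexHull_empty] at h
  exact singleton_ne_empty v h

theorem IsFace.isPolytope (hP : IsPolytope P) (hG : IsFace P G) : IsPolytope G := by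
  classical
  obtain ⟨S, hS⟩ := hP
  exact ⟨S.filter (· ∈ G), by rw [Finset.coe_filter]; exact hG.eq_convexHull_inter hS⟩

theorem IsFace.convex (hP : IsPolytope P) (hG : IsFace P G) : Convex ℝ G := by
  obtain ⟨S, hS⟩ := hG.isPolytope hP
  exact hS ▸ convex_convexHull ℝ _

theorem IsPolytope.finite_setOf_isFace (hP : IsPolytope P) : {G | IsFace P G}.Finite := by
  obtain ⟨S, hS⟩ := hP
  refine (S.finite_toSet.powerset.image (convexHull ℝ)).subset fun G hG => ?_
  exact ⟨_, inter_subset_left, (IsFace.eq_convexHull_inter hS hG).symm⟩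

theorem IsFace.trans (hP : IsPolytope P) (hG : IsFace P G) (hW : IsFace G W) : IsFace P W := by
  obtain ⟨S, rfl⟩ := hP
  obtain ⟨f, c, hf, rfl⟩ := isFace_iff.1 hG
  obtain ⟨h, m, hh, rfl⟩ := isFace_iff.1 hW
  have hfS : ∀ s ∈ (S : Set (Fin n → ℝ)), f s ≤ c := fun s hs => hf s (subset_convexHull ℝ _ hs)
  have hhS : ∀ s ∈ (S : Set (Fin n → ℝ)), f s = c → h s ≤ m := fun s hs hfs =>
    hh s ⟨subset_convexHull ℝ _ hs, hfs⟩
  classical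
  -- tilt the supporting hyperplane of `G` towards that of `W`, slightly enough that it still
  -- supports `P`
  obtain ⟨ε, hε, hlt⟩ := (S.filter (f · ≠ c)).exists_pos_forall_add_mul_neg (a := (f · - c))
    (h · - m) fun s hs => sub_neg.2 <| (hfS s (Finset.mem_filter.1 hs).1).lt_of_ne
      (Finset.mem_filter.1 hs).2
  have hq : ∀ s ∈ (S : Set (Fin n → ℝ)),
      f s + ε * h s ≤ c + ε * m ∧ (f s + ε * h s = c + ε * m ↔ f s = c ∧ h s = m) := by
    intro s hs
    by_cases hfs : f s = c
    · have := hhS s hs hfs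
      refine ⟨by nlinarith, fun he => ⟨hfs, ?_⟩, fun ⟨_, hhs⟩ => by rw [hfs, hhs]⟩
      exact mul_left_cancel₀ hε.ne' (by linarith)
    · have := hlt s (Finset.mem_filter.2 ⟨hs, hfs⟩)
      exact ⟨by linarith, fun he => absurd he (by linarith), fun he => absurd he.1 hfs⟩
  refine isFace_iff.2 ⟨f + ε • h, c + ε * m, fun x hx => ?_, ?_⟩
  · exact LinearMap.le_of_mem_convexHull (fun s hs => by simpa using (hq s hs).1) hx
  rw [sep_convexHull_eq_convexHull_sep hfS,
    sep_convexHull_eq_convexHull_sep (s := {x ∈ (S : Set (Fin n → ℝ)) | f x = c})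
      fun s hs => hhS s hs.1 hs.2,
    sep_convexHull_eq_convexHull_sep (f := f + ε • h) fun s hs => by simpa using (hq s hs).1]
  refine congrArg (convexHull ℝ) (ext fun s => ?_)
  simp only [mem_ofPred_eq, LinearMap.add_apply, LinearMap.smul_apply, smul_eq_mul]
  exact ⟨fun ⟨⟨hs, hfs⟩, hhs⟩ => ⟨hs, (hq s hs).2.2 ⟨hfs, hhs⟩⟩,
    fun ⟨hs, he⟩ => ⟨⟨hs, ((hq s hs).2.1 he).1⟩, ((hq s hs).2.1 he).2⟩⟩

end Faces

section Vertices

variable {n : ℕ} {P G K : Set (Fin n → ℝ)} {v : Fin n → ℝ}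

theorem IsVertex.mem_extremePoints (h : IsVertex P v) : v ∈ P.extremePoints ℝ := by
  obtain ⟨f, c, hf, he⟩ := isFace_iff.1 h
  have hv : v ∈ P ∧ f v = c := he.subset rfl
  have hP : ∀ x ∈ P, f x = c → x = v := fun x hx hfx => he.superset ⟨hx, hfx⟩
  refine _root_.mem_extremePoints.2 ⟨hv.1, fun x₁ h₁ x₂ h₂ ⟨a, b, ha, hb, hab, hx⟩ => ?_⟩
  have hfx : a * f x₁ + b * f x₂ = c := by simpa [← hv.2] using congrArg f hx
  have h₁' := mul_nonneg ha.le (sub_nonneg.2 (hf x₁ h₁))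
  have h₂' := mul_nonneg hb.le (sub_nonneg.2 (hf x₂ h₂))
  have hsum : a * (c - f x₁) + b * (c - f x₂) = 0 := by linear_combination c * hab - hfx
  have key : ∀ {w x}, 0 < w → x ∈ P → w * (c - f x) = 0 → x = v := fun hw hx hwx =>
    hP _ hx (by linarith [(mul_eq_zero.1 hwx).resolve_left hw.ne'])
  exact ⟨key ha h₁ (by linarith), key hb h₂ (by linarith)⟩

theorem IsPolytope.isVertex_of_mem_extremePoints (hP : IsPolytope P)
    (hv : v ∈ P.extremePoints ℝ) : IsVertex P v := by
  obtain ⟨S, rfl⟩ := hP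
  have hvS : v ∈ (S : Set (Fin n → ℝ)) := extremePoints_convexHull_subset hv
  have hsep : v ∉ convexHull ℝ (↑S \ {v}) := fun h =>
    ((convex_convexHull ℝ _).mem_extremePoints_iff_mem_sdiff_convexHull_sdiff.1 hv).2
      (convexHull_mono (sdiff_subset_sdiff_left (subset_convexHull ℝ _)) h)
  obtain ⟨φ, u, hφ, hu⟩ := geometric_hahn_banach_closed_point (convex_convexHull ℝ _)
    ((S.finite_toSet.sdiff (t := {v})).isCompact_convexHull (𝕜 := ℝ)).isClosed hsep
  have hlt : ∀ s ∈ (S : Set (Fin n → ℝ)), s ≠ v → φ s < φ v := fun s hs hsv =>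
    (hφ s (subset_convexHull ℝ _ ⟨hs, hsv⟩)).trans hu
  have hle : ∀ s ∈ (S : Set (Fin n → ℝ)), (φ : (Fin n → ℝ) →ₗ[ℝ] ℝ) s ≤ φ v := fun s hs =>
    (eq_or_ne s v).elim (fun h => h ▸ le_rfl) fun h => (hlt s hs h).le
  refine isFace_iff.2 ⟨φ, φ v, fun x hx => LinearMap.le_of_mem_convexHull hle hx, ?_⟩
  rw [sep_convexHull_eq_convexHull_sep hle]
  convert (convexHull_singleton v).symm using 2
  ext s
  exact ⟨fun ⟨hs, he⟩ => by_contra fun hsv => (hlt s hs hsv).ne he,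
    fun h => (mem_singleton_iff.1 h).symm ▸ ⟨hvS, rfl⟩⟩

theorem IsPolytope.convexHull_extremePoints (hP : IsPolytope P) :
    convexHull ℝ (P.extremePoints ℝ) = P := by
  obtain ⟨S, rfl⟩ := hP
  have hfin : (extremePoints ℝ (convexHull ℝ (S : Set (Fin n → ℝ)))).Finite :=
    S.finite_toSet.subset extremePoints_convexHull_subset
  rw [← (hfin.isCompact_convexHull (𝕜 := ℝ)).isClosed.closure_eq]
  exact closure_convexHull_extremePoints (S.finite_toSet.isCompact_convexHull (𝕜 := ℝ))
    (convex_convexHull ℝ _)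

theorem IsPolytope.exists_isVertex_notMem (hP : IsPolytope P) (hK : Convex ℝ K)
    (hPK : ¬ P ⊆ K) : ∃ v, IsVertex P v ∧ v ∉ K := by
  by_contra! h
  exact hPK (hP.convexHull_extremePoints ▸ convexHull_min
    (fun v hv => h v (hP.isVertex_of_mem_extremePoints hv)) hK)

theorem IsFace.exists_isVertex_notMem (hP : IsPolytope P) (hG : IsFace P G) (hK : Convex ℝ K)
    (hGK : ¬ G ⊆ K) : ∃ v, IsVertex P v ∧ v ∈ G ∧ v ∉ K := by
  obtain ⟨v, hv, hvK⟩ := (hG.isPolytope hP).exists_isVertex_notMem hK hGK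
  exact ⟨v, IsFace.trans hP hG hv, hv.mem, hvK⟩

end Vertices

theorem finrank_span_eq_finrank_vectorSpan_add_one {E : Type*} [AddCommGroup E] [Module ℝ E]
    [FiniteDimensional ℝ E] {A : Set E} {g : E →ₗ[ℝ] ℝ} {r : ℝ} (hA : A.Nonempty) (hr : r ≠ 0)
    (hg : ∀ a ∈ A, g a = r) :
    Module.finrank ℝ (Submodule.span ℝ A) = Module.finrank ℝ (vectorSpan ℝ A) + 1 := by
  obtain ⟨a₀, ha₀⟩ := hA
  have hker : vectorSpan ℝ A ≤ LinearMap.ker g := by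
    rw [vectorSpan_def, Submodule.span_le]
    rintro _ ⟨a, ha, b, hb, rfl⟩
    simp [hg a ha, hg b hb]
  have hsup : Submodule.span ℝ A = vectorSpan ℝ A ⊔ ℝ ∙ a₀ := by
    refine le_antisymm (Submodule.span_le.2 fun a ha => ?_) (sup_le ?_ ?_)
    · rw [← sub_add_cancel a a₀]
      exact Submodule.add_mem_sup (vsub_mem_vectorSpan ℝ ha ha₀)
        (Submodule.mem_span_singleton_self a₀)
    · rw [vectorSpan_def, Submodule.span_le]
      rintro _ ⟨a, ha, b, hb, rfl⟩
      exact Submodule.sub_mem _ (Submodule.subset_span ha) (Submodule.subset_span hb)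
    · exact (Submodule.span_singleton_le_iff_mem _ _).2 (Submodule.subset_span ha₀)
  have hinf : vectorSpan ℝ A ⊓ ℝ ∙ a₀ = ⊥ := by
    refine (Submodule.eq_bot_iff _).2 fun x hx => ?_
    obtain ⟨t, rfl⟩ := Submodule.mem_span_singleton.1 (Submodule.mem_inf.1 hx).2
    have := hker (Submodule.mem_inf.1 hx).1
    rw [LinearMap.mem_ker, map_smul, hg a₀ ha₀, smul_eq_mul, mul_eq_zero] at this
    rw [this.resolve_right hr, zero_smul]
  have ha₀ : a₀ ≠ 0 := fun h => hr (by rw [← hg a₀ ha₀, h, map_zero])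
  have := Submodule.finrank_sup_add_finrank_inf_eq (vectorSpan ℝ A) (ℝ ∙ a₀)
  rw [hinf, finrank_bot, finrank_span_singleton ha₀, ← hsup] at this
  omega

section Dimension

variable {n : ℕ} {P K A B : Set (Fin n → ℝ)} {v : Fin n → ℝ}

theorem sdim_mono (h : A ⊆ B) : sdim A ≤ sdim B :=
  Submodule.finrank_mono (vectorSpan_mono ℝ h)

@[simp]
theorem sdim_empty : sdim (∅ : Set (Fin n → ℝ)) = 0 := by
  simp [sdim]

@[simp]
theorem sdim_singleton (v : Fin n → ℝ) : sdim ({v} : Set (Fin n → ℝ)) = 0 := by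
  simp [sdim]

theorem sdim_convexHull (A : Set (Fin n → ℝ)) : sdim (convexHull ℝ A) = sdim A := by
  rw [sdim, ← direction_affineSpan, affineSpan_convexHull, direction_affineSpan, sdim]

theorem subsingleton_of_sdim_eq_zero (h : sdim A = 0) : A.Subsingleton := fun _ ha _ hb =>
  sub_eq_zero.1 <| (Submodule.mem_bot ℝ).1 <|
    Submodule.finrank_eq_zero.1 h ▸ vsub_mem_vectorSpan ℝ ha hb

theorem nonempty_of_sdim_pos (h : 0 < sdim A) : A.Nonempty :=
  nonempty_iff_ne_empty.2 fun hA => by simp [hA] at h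

theorem not_subset_singleton_of_sdim_pos (h : 0 < sdim A) (v : Fin n → ℝ) : ¬ A ⊆ {v} :=
  fun hA => by simpa using (sdim_mono hA).trans_lt' h

theorem exists_eq_singleton_of_sdim_eq_zero (hA : A.Nonempty) (h : sdim A = 0) :
    ∃ v, A = {v} := by
  obtain ⟨v, hv⟩ := hA
  exact ⟨v, (subsingleton_of_sdim_eq_zero h).eq_singleton_of_mem hv⟩

theorem IsVertex.isFacet_singleton (hv : IsVertex P v) (hP : sdim P = 1) : IsFacet P {v} :=
  ⟨hv, singleton_nonempty v, by simp [hP]⟩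

theorem IsFacet.ne_singleton (hK : IsFacet P K) (hP : 2 ≤ sdim P) : K ≠ {v} := by
  rintro rfl
  have := hK.2.2
  rw [sdim_singleton] at this
  omega

def facetsAt (P : Set (Fin n → ℝ)) (v : Fin n → ℝ) : Set (Set (Fin n → ℝ)) :=
  {K | IsFacet P K ∧ v ∈ K}

theorem IsPolytope.finite_setOf_isFacet (hP : IsPolytope P) : {K | IsFacet P K}.Finite :=
  hP.finite_setOf_isFace.subset fun _ hK => hK.1

theorem IsPolytope.finite_facetsAt (hP : IsPolytope P) (v : Fin n → ℝ) : (facetsAt P v).Finite :=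
  hP.finite_setOf_isFacet.subset fun _ hK => hK.1

end Dimension

namespace VertexFigure

variable {n : ℕ}

/-- `v + proj g c v t` is the point where the ray from `v` through `t` meets the hyperplane
`g = c - 1`; for `v` exposed by `g ≤ c`, the vertex figure at `v` is spanned by these points,
translated to the hyperplane `g = -1`. -/
noncomputable def proj (g : (Fin n → ℝ) →ₗ[ℝ] ℝ) (c : ℝ) (v t : Fin n → ℝ) : Fin n → ℝ :=
  (c - g t)⁻¹ • (t - v)

structure Exposes (P : Set (Fin n → ℝ)) (S : Finset (Fin n → ℝ)) (g : (Fin n → ℝ) →ₗ[ℝ] ℝ)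
    (c : ℝ) (v : Fin n → ℝ) : Prop where
  eq_convexHull : P = convexHull ℝ ↑S
  le : ∀ x ∈ P, g x ≤ c
  eq_sep : {v} = {x ∈ P | g x = c}

variable (S : Finset (Fin n → ℝ)) (g : (Fin n → ℝ) →ₗ[ℝ] ℝ) (c : ℝ) (v : Fin n → ℝ)

noncomputable def _root_.vertexFigure : Set (Fin n → ℝ) :=
  convexHull ℝ (proj g c v '' (↑S \ {v}))

noncomputable def toFigure (G : Set (Fin n → ℝ)) : Set (Fin n → ℝ) :=
  convexHull ℝ (proj g c v '' ((↑S ∩ G) \ {v}))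

noncomputable def ofFigure (H : Set (Fin n → ℝ)) : Set (Fin n → ℝ) :=
  convexHull ℝ (insert v (↑S ∩ proj g c v ⁻¹' H))

theorem isPolytope_vertexFigure : IsPolytope (vertexFigure S g c v) := by
  classical
  exact ⟨(S.erase v).image (proj g c v), by simp [vertexFigure]⟩

variable {S g c v} {P G H : Set (Fin n → ℝ)} {t : Fin n → ℝ}

theorem exists_exposes (hP : IsPolytope P) (hv : IsVertex P v) : ∃ S g c, Exposes P S g c v := by
  obtain ⟨S, hS⟩ := hP
  obtain ⟨g, c, hg, hgv⟩ := isFace_iff.1 hv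
  exact ⟨S, g, c, hS, hg, hgv⟩

theorem toFigure_mono {G₁ G₂ : Set (Fin n → ℝ)} (h : G₁ ⊆ G₂) :
    toFigure S g c v G₁ ⊆ toFigure S g c v G₂ :=
  convexHull_mono (image_mono (sdiff_subset_sdiff_left (inter_subset_inter_right _ h)))

theorem ofFigure_mono {H₁ H₂ : Set (Fin n → ℝ)} (h : H₁ ⊆ H₂) :
    ofFigure S g c v H₁ ⊆ ofFigure S g c v H₂ :=
  convexHull_mono (insert_subset_insert (inter_subset_inter_right _ (preimage_mono h)))

theorem mem_ofFigure : v ∈ ofFigure S g c v H := subset_convexHull ℝ _ (mem_insert v _)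

@[simp]
theorem toFigure_singleton : toFigure S g c v {v} = ∅ := by
  rw [toFigure, sdiff_eq_empty.2 inter_subset_right, image_empty, convexHull_empty]

namespace Exposes

theorem isVertex (h : Exposes P S g c v) : IsVertex P v := isFace_iff.2 ⟨g, c, h.le, h.eq_sep⟩

theorem isPolytope (h : Exposes P S g c v) : IsPolytope P := ⟨S, h.eq_convexHull⟩

theorem apply_self (h : Exposes P S g c v) : g v = c := (h.eq_sep.subset rfl).2

theorem mem_finset (h : Exposes P S g c v) : v ∈ S :=
  h.isVertex.mem_of_eq_convexHull h.eq_convexHull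

theorem mem_of_mem_finset (h : Exposes P S g c v) (ht : t ∈ S) : t ∈ P :=
  h.eq_convexHull ▸ subset_convexHull ℝ _ ht

theorem lt (h : Exposes P S g c v) (ht : t ∈ S) (htv : t ≠ v) : g t < c :=
  (h.le t (h.mem_of_mem_finset ht)).lt_of_ne fun hgt =>
    htv (h.eq_sep.superset ⟨h.mem_of_mem_finset ht, hgt⟩)

theorem sub_eq_smul_proj (h : Exposes P S g c v) (ht : t ∈ S) (htv : t ≠ v) :
    t - v = (c - g t) • proj g c v t := by
  rw [proj, smul_smul, mul_inv_cancel₀ (sub_pos.2 (h.lt ht htv)).ne', one_smul]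

theorem apply_proj (h : Exposes P S g c v) (ht : t ∈ S) (htv : t ≠ v) :
    g (proj g c v t) = -1 := by
  have := sub_pos.2 (h.lt ht htv)
  rw [proj, map_smul, map_sub, h.apply_self, smul_eq_mul]
  field_simp
  ring

theorem apply_of_mem_vertexFigure (h : Exposes P S g c v) {y : Fin n → ℝ}
    (hy : y ∈ vertexFigure S g c v) : g y = -1 := by
  refine convexHull_min ?_ (convex_hyperplane g.isLinear (-1)) hy
  rintro _ ⟨t, ⟨ht, htv⟩, rfl⟩
  exact h.apply_proj ht htv

theorem map_proj_nonpos (h : Exposes P S g c v) {f : (Fin n → ℝ) →ₗ[ℝ] ℝ} {cf : ℝ}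
    (hf : ∀ x ∈ P, f x ≤ cf) (hfv : f v = cf) (ht : t ∈ S) (htv : t ≠ v) :
    f (proj g c v t) ≤ 0 ∧ (f (proj g c v t) = 0 ↔ f t = cf) := by
  have hpos := inv_pos.2 (sub_pos.2 (h.lt ht htv))
  have hft := hf t (h.mem_of_mem_finset ht)
  rw [proj, map_smul, map_sub, hfv, smul_eq_mul, mul_eq_zero, sub_eq_zero]
  exact ⟨mul_nonpos_of_nonneg_of_nonpos hpos.le (by linarith), or_iff_right hpos.ne'⟩

theorem map_nonpos_of_mem_vertexFigure (h : Exposes P S g c v) {f : (Fin n → ℝ) →ₗ[ℝ] ℝ}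
    {cf : ℝ} (hf : ∀ x ∈ P, f x ≤ cf) (hfv : f v = cf) {y : Fin n → ℝ}
    (hy : y ∈ vertexFigure S g c v) : f y ≤ 0 := by
  refine LinearMap.le_of_mem_convexHull ?_ hy
  rintro _ ⟨t, ⟨ht, htv⟩, rfl⟩
  exact (h.map_proj_nonpos hf hfv ht htv).1

theorem toFigure_sep_eq (h : Exposes P S g c v) {f : (Fin n → ℝ) →ₗ[ℝ] ℝ} {cf : ℝ}
    (hf : ∀ x ∈ P, f x ≤ cf) (hfv : f v = cf) :
    toFigure S g c v {x ∈ P | f x = cf} = {y ∈ vertexFigure S g c v | f y = 0} := by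
  have hle : ∀ y ∈ proj g c v '' (↑S \ {v}), f y ≤ 0 := fun y hy =>
    h.map_nonpos_of_mem_vertexFigure hf hfv (subset_convexHull ℝ _ hy)
  rw [vertexFigure, sep_convexHull_eq_convexHull_sep hle, toFigure]
  refine congrArg (convexHull ℝ) (ext fun y => ⟨?_, ?_⟩)
  · rintro ⟨t, ⟨⟨ht, -, hft⟩, htv⟩, rfl⟩
    exact ⟨⟨t, ⟨ht, htv⟩, rfl⟩, (h.map_proj_nonpos hf hfv ht htv).2.2 hft⟩
  · rintro ⟨⟨t, ⟨ht, htv⟩, rfl⟩, hft⟩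
    exact ⟨t, ⟨⟨ht, h.mem_of_mem_finset ht, (h.map_proj_nonpos hf hfv ht htv).2.1 hft⟩, htv⟩, rfl⟩

theorem isFace_toFigure (h : Exposes P S g c v) (hG : IsFace P G) (hvG : v ∈ G) :
    IsFace (vertexFigure S g c v) (toFigure S g c v G) := by
  obtain ⟨f, cf, hf, rfl⟩ := isFace_iff.1 hG
  exact isFace_iff.2 ⟨f, 0, fun y => h.map_nonpos_of_mem_vertexFigure hf hvG.2,
    h.toFigure_sep_eq hf hvG.2⟩

theorem proj_mem_toFigure_iff (h : Exposes P S g c v) (hG : IsFace P G) (hvG : v ∈ G)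
    (ht : t ∈ S) (htv : t ≠ v) : proj g c v t ∈ toFigure S g c v G ↔ t ∈ G := by
  obtain ⟨f, cf, hf, rfl⟩ := isFace_iff.1 hG
  rw [h.toFigure_sep_eq hf hvG.2]
  exact ⟨fun hy => ⟨h.mem_of_mem_finset ht, (h.map_proj_nonpos hf hvG.2 ht htv).2.1 hy.2⟩,
    fun htG => ⟨subset_convexHull ℝ _ ⟨t, ⟨ht, htv⟩, rfl⟩,
      (h.map_proj_nonpos hf hvG.2 ht htv).2.2 htG.2⟩⟩

theorem exists_ofFigure_eq (h : Exposes P S g c v) (hH : IsFace (vertexFigure S g c v) H) :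
    ∃ (q : (Fin n → ℝ) →ₗ[ℝ] ℝ) (cq : ℝ), (∀ x ∈ P, q x ≤ cq) ∧
      ofFigure S g c v H = {x ∈ P | q x = cq} ∧
      ∀ t ∈ S, t ≠ v → (q t = cq ↔ proj g c v t ∈ H) := by
  obtain ⟨k, m, hk, rfl⟩ := isFace_iff.1 hH
  have hq : ∀ t ∈ S, t ≠ v →
      (k + m • g) t - (k v + m * c) = (c - g t) * (k (proj g c v t) - m) := by
    intro t ht htv
    have hkt : k t - k v = (c - g t) * k (proj g c v t) := by
      rw [← map_sub, h.sub_eq_smul_proj ht htv, map_smul, smul_eq_mul]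
    simp only [LinearMap.add_apply, LinearMap.smul_apply, smul_eq_mul]
    linear_combination hkt
  have hiff : ∀ t ∈ S, t ≠ v →
      (k + m • g) t ≤ k v + m * c ∧ ((k + m • g) t = k v + m * c ↔
        proj g c v t ∈ {y ∈ vertexFigure S g c v | k y = m}) := by
    intro t ht htv
    have hpos := sub_pos.2 (h.lt ht htv)
    have hmem : proj g c v t ∈ vertexFigure S g c v := subset_convexHull ℝ _ ⟨t, ⟨ht, htv⟩, rfl⟩
    have hkm := hk _ hmem
    rw [← sub_nonpos, ← sub_eq_zero, hq t ht htv, mul_eq_zero]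
    exact ⟨mul_nonpos_of_nonneg_of_nonpos hpos.le (by linarith),
      ⟨fun he => ⟨hmem, sub_eq_zero.1 (he.resolve_left hpos.ne')⟩,
        fun he => Or.inr (sub_eq_zero.2 he.2)⟩⟩
  have hvq : (k + m • g) v = k v + m * c := by simp [h.apply_self]
  have hS : ∀ t ∈ (S : Set (Fin n → ℝ)), (k + m • g) t ≤ k v + m * c := fun t ht =>
    (eq_or_ne t v).elim (fun htv => htv ▸ hvq.le) fun htv => (hiff t ht htv).1
  refine ⟨k + m • g, k v + m * c, fun x hx => ?_, ?_, fun t ht htv => (hiff t ht htv).2⟩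
  · exact LinearMap.le_of_mem_convexHull hS (h.eq_convexHull ▸ hx)
  rw [h.eq_convexHull, sep_convexHull_eq_convexHull_sep hS, ofFigure]
  refine congrArg (convexHull ℝ) (ext fun t => ⟨?_, fun ⟨ht, hqt⟩ => ?_⟩)
  · rintro (rfl | ⟨ht, hpt⟩)
    · exact ⟨h.mem_finset, hvq⟩
    · have htv : t ≠ v := fun htv => by
        simpa [htv, proj] using h.apply_of_mem_vertexFigure hpt.1
      exact ⟨ht, (hiff t ht htv).2.2 hpt⟩
  · by_cases htv : t = v
    · exact mem_insert_iff.2 (Or.inl htv)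
    · exact mem_insert_of_mem v ⟨ht, (hiff t ht htv).2.1 hqt⟩

theorem isFace_ofFigure (h : Exposes P S g c v) (hH : IsFace (vertexFigure S g c v) H) :
    IsFace P (ofFigure S g c v H) := by
  obtain ⟨q, cq, hq, heq, -⟩ := h.exists_ofFigure_eq hH
  exact isFace_iff.2 ⟨q, cq, hq, heq⟩

theorem mem_ofFigure_iff (h : Exposes P S g c v) (hH : IsFace (vertexFigure S g c v) H)
    (ht : t ∈ S) (htv : t ≠ v) : t ∈ ofFigure S g c v H ↔ proj g c v t ∈ H := by
  obtain ⟨q, cq, -, heq, hiff⟩ := h.exists_ofFigure_eq hH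
  rw [heq, ← hiff t ht htv]
  exact ⟨fun h => h.2, fun hq => ⟨h.mem_of_mem_finset ht, hq⟩⟩

theorem ofFigure_toFigure (h : Exposes P S g c v) (hG : IsFace P G) (hvG : v ∈ G) :
    ofFigure S g c v (toFigure S g c v G) = G := by
  refine Eq.trans ?_ (hG.eq_convexHull_inter h.eq_convexHull).symm
  refine congrArg (convexHull ℝ) (ext fun t => ⟨?_, fun ⟨ht, htG⟩ => ?_⟩)
  · rintro (rfl | ⟨ht, hpt⟩)
    · exact ⟨h.mem_finset, hvG⟩
    · by_cases htv : t = v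
      · exact htv ▸ ⟨h.mem_finset, hvG⟩
      · exact ⟨ht, (h.proj_mem_toFigure_iff hG hvG ht htv).1 hpt⟩
  · by_cases htv : t = v
    · exact mem_insert_iff.2 (Or.inl htv)
    · exact mem_insert_of_mem v ⟨ht, (h.proj_mem_toFigure_iff hG hvG ht htv).2 htG⟩

theorem toFigure_ofFigure (h : Exposes P S g c v) (hH : IsFace (vertexFigure S g c v) H) :
    toFigure S g c v (ofFigure S g c v H) = H := by
  refine Eq.trans ?_ (hH.eq_convexHull_inter rfl).symm
  refine congrArg (convexHull ℝ) (ext fun y => ⟨?_, ?_⟩)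
  · rintro ⟨t, ⟨⟨ht, htH⟩, htv⟩, rfl⟩
    exact ⟨⟨t, ⟨ht, htv⟩, rfl⟩, (h.mem_ofFigure_iff hH ht htv).1 htH⟩
  · rintro ⟨⟨t, ⟨ht, htv⟩, rfl⟩, hy⟩
    exact ⟨t, ⟨⟨ht, (h.mem_ofFigure_iff hH ht htv).2 hy⟩, htv⟩, rfl⟩

theorem exists_mem_ne (h : Exposes P S g c v) (hG : IsFace P G) (hvG : v ∈ G) (hne : G ≠ {v}) :
    ∃ t ∈ S, t ∈ G ∧ t ≠ v := by
  by_contra! hS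
  refine hne (Subset.antisymm ?_ (singleton_subset_iff.2 hvG))
  rw [hG.eq_convexHull_inter h.eq_convexHull]
  exact convexHull_min (fun t ⟨ht, htG⟩ => hS t ht htG) (convex_singleton v)

theorem toFigure_nonempty (h : Exposes P S g c v) (hG : IsFace P G) (hvG : v ∈ G)
    (hne : G ≠ {v}) : (toFigure S g c v G).Nonempty := by
  obtain ⟨t, ht, htG, htv⟩ := h.exists_mem_ne hG hvG hne
  exact ⟨_, subset_convexHull ℝ _ (mem_image_of_mem _ ⟨⟨ht, htG⟩, htv⟩)⟩

theorem sdim_toFigure (h : Exposes P S g c v) (hG : IsFace P G) (hvG : v ∈ G) (hne : G ≠ {v}) :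
    sdim G = sdim (toFigure S g c v G) + 1 := by
  set A := proj g c v '' ((↑S ∩ G) \ {v})
  have hspan : Submodule.span ℝ ((· -ᵥ v) '' (↑S ∩ G)) = Submodule.span ℝ A := by
    refine le_antisymm (Submodule.span_le.2 ?_) (Submodule.span_le.2 ?_)
    · rintro _ ⟨t, ⟨ht, htG⟩, rfl⟩
      by_cases htv : t = v
      · simp [htv]
      · change t - v ∈ Submodule.span ℝ A
        rw [h.sub_eq_smul_proj ht htv]
        exact Submodule.smul_mem _ _ (Submodule.subset_span ⟨t, ⟨⟨ht, htG⟩, htv⟩, rfl⟩)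
    · rintro _ ⟨t, ⟨htG, -⟩, rfl⟩
      exact Submodule.smul_mem _ _ (Submodule.subset_span ⟨t, htG, rfl⟩)
  obtain ⟨t, ht, htG, htv⟩ := h.exists_mem_ne hG hvG hne
  have hA : ∀ a ∈ A, g a = -1 := by
    rintro _ ⟨t, ⟨⟨ht, -⟩, htv⟩, rfl⟩
    exact h.apply_proj ht htv
  have hAne : A.Nonempty := ⟨_, mem_image_of_mem _ ⟨⟨ht, htG⟩, htv⟩⟩
  rw [(congrArg sdim (hG.eq_convexHull_inter h.eq_convexHull)).trans (sdim_convexHull _),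
    toFigure, sdim_convexHull, sdim, sdim,
    vectorSpan_eq_span_vsub_set_right ℝ (show v ∈ ↑S ∩ G from ⟨h.mem_finset, hvG⟩), hspan,
    finrank_span_eq_finrank_vectorSpan_add_one hAne (by norm_num) hA]

theorem sdim_vertexFigure (h : Exposes P S g c v) (hP : 0 < sdim P) :
    sdim P = sdim (vertexFigure S g c v) + 1 := by
  rw [h.sdim_toFigure (isFace_self P) h.isVertex.mem
      fun hPv => not_subset_singleton_of_sdim_pos hP v hPv.subset, toFigure, vertexFigure,
    inter_eq_left.2 fun t ht => h.mem_of_mem_finset ht]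

theorem ne_singleton_of_toFigure_nonempty (hG : (toFigure S g c v G).Nonempty) : G ≠ {v} := by
  rintro rfl
  simp at hG

theorem bijOn_toFigure_facetsAt (h : Exposes P S g c v) (hP : 2 ≤ sdim P) :
    BijOn (toFigure S g c v) (facetsAt P v) {H | IsFacet (vertexFigure S g c v) H} := by
  have hdim := h.sdim_vertexFigure (by omega)
  refine ⟨fun K ⟨hK, hvK⟩ => ?_, fun K₁ hK₁ K₂ hK₂ he => ?_, fun H hH => ?_⟩
  · have hKv : K ≠ {v} := hK.ne_singleton hP
    have := h.sdim_toFigure hK.1 hvK hKv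
    exact ⟨h.isFace_toFigure hK.1 hvK, h.toFigure_nonempty hK.1 hvK hKv, by have := hK.2.2; omega⟩
  · rw [← h.ofFigure_toFigure hK₁.1.1 hK₁.2, he, h.ofFigure_toFigure hK₂.1.1 hK₂.2]
  · have hHK := h.toFigure_ofFigure hH.1
    have hKv : ofFigure S g c v H ≠ {v} := ne_singleton_of_toFigure_nonempty (hHK ▸ hH.2.1)
    have := h.sdim_toFigure (h.isFace_ofFigure hH.1) mem_ofFigure hKv
    rw [hHK] at this
    exact ⟨ofFigure S g c v H, ⟨⟨h.isFace_ofFigure hH.1, ⟨v, mem_ofFigure⟩,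
      by have := hH.2.2; omega⟩, mem_ofFigure⟩, hHK⟩

theorem isEdge_ofFigure (h : Exposes P S g c v) {y : Fin n → ℝ}
    (hy : IsVertex (vertexFigure S g c v) y) : IsEdge P (ofFigure S g c v {y}) := by
  have hyE := h.toFigure_ofFigure hy
  have hEv : ofFigure S g c v {y} ≠ {v} :=
    ne_singleton_of_toFigure_nonempty (hyE ▸ singleton_nonempty y)
  have := h.sdim_toFigure (h.isFace_ofFigure hy) mem_ofFigure hEv
  rw [hyE, sdim_singleton] at this
  exact ⟨h.isFace_ofFigure hy, this⟩

theorem exists_eq_ofFigure_of_isEdge (h : Exposes P S g c v) {E : Set (Fin n → ℝ)}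
    (hE : IsEdge P E) (hvE : v ∈ E) :
    ∃ y, IsVertex (vertexFigure S g c v) y ∧ E = ofFigure S g c v {y} := by
  have hEv : E ≠ {v} := fun hEv => by simpa [hEv] using hE.2
  have := h.sdim_toFigure hE.1 hvE hEv
  obtain ⟨y, hy⟩ := exists_eq_singleton_of_sdim_eq_zero (h.toFigure_nonempty hE.1 hvE hEv)
    (by have := hE.2; omega)
  refine ⟨y, show IsFace _ {y} from hy ▸ h.isFace_toFigure hE.1 hvE, ?_⟩
  rw [← hy, h.ofFigure_toFigure hE.1 hvE]

end Exposes

end VertexFigure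

open VertexFigure

section Edges

variable {n : ℕ} {P E : Set (Fin n → ℝ)} {v : Fin n → ℝ}

theorem IsEdge.existsUnique_isVertex_ne (hP : IsPolytope P) (hE : IsEdge P E)
    (hv : IsVertex P v) (hvE : v ∈ E) : ∃! x, IsVertex P x ∧ x ∈ E ∧ x ≠ v := by
  obtain ⟨S, g, c, h⟩ := exists_exposes hP hv
  obtain ⟨y, hy, rfl⟩ := h.exists_eq_ofFigure_of_isEdge hE hvE
  obtain ⟨x, hx, hxE, hxv⟩ := hE.1.exists_isVertex_notMem hP (convex_singleton v)
    (not_subset_singleton_of_sdim_pos (hE.2 ▸ one_pos) v)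
  have hray : ∀ z, IsVertex P z → z ∈ ofFigure S g c v {y} → z ≠ v →
      z = v + (c - g z) • y ∧ 0 < c - g z := by
    intro z hz hzE hzv
    have hzS := hz.mem_of_eq_convexHull h.eq_convexHull
    refine ⟨?_, sub_pos.2 (h.lt hzS hzv)⟩
    rw [← (h.mem_ofFigure_iff hy hzS hzv).1 hzE, ← h.sub_eq_smul_proj hzS hzv]
    abel
  refine ⟨x, ⟨hx, hxE, hxv⟩, fun x' ⟨hx', hx'E, hx'v⟩ => ?_⟩
  obtain ⟨hx'y, hx'₀⟩ := hray x' hx' hx'E hx'v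
  obtain ⟨hxy, hx₀⟩ := hray x hx hxE hxv
  calc x' = v + (c - g x') • y := hx'y
    _ = v + (c - g x) • y := add_smul_eq_of_mem_extremePoints hv.mem
          (hx'y ▸ hx'.mem_extremePoints) (hxy ▸ hx.mem_extremePoints) hx'₀ hx₀
    _ = x := hxy.symm

end Edges

section FacetsAtVertex

variable {n : ℕ} {P : Set (Fin n → ℝ)} {v : Fin n → ℝ}

theorem succ_sdim_le_ncard_setOf_isFacet (hP : IsPolytope P)
    (hle : sdim P ≤ (facetsAt P v).ncard) (hK : ∃ K, IsFacet P K ∧ v ∉ K) :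
    sdim P + 1 ≤ {K | IsFacet P K}.ncard := by
  obtain ⟨K, hK, hvK⟩ := hK
  have := ncard_insert_of_notMem (fun h => hvK h.2) (hP.finite_facetsAt v)
  have := ncard_le_ncard (t := {K | IsFacet P K})
    (insert_subset hK fun K' (hK' : K' ∈ facetsAt P v) => hK'.1) hP.finite_setOf_isFacet
  omega

theorem exists_isFacet_notMem_of_forall_eq (hP : IsPolytope P) (hP₁ : 1 ≤ sdim P)
    (hcut : ∀ w, IsVertex P w → ∀ p ∈ P, (∀ K ∈ facetsAt P w, p ∈ K) → p = w)
    (hv : IsVertex P v) : ∃ K, IsFacet P K ∧ v ∉ K := by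
  obtain ⟨w, hw, hwv⟩ :=
    hP.exists_isVertex_notMem (convex_singleton v) (not_subset_singleton_of_sdim_pos hP₁ v)
  by_contra! hK
  exact hwv (hcut w hw v hv.mem fun K hK' => hK K hK'.1).symm

namespace VertexFigure.Exposes

variable {S : Finset (Fin n → ℝ)} {g : (Fin n → ℝ) →ₗ[ℝ] ℝ} {c : ℝ}

theorem eq_of_forall_facetsAt_mem (h : Exposes P S g c v) (hP : 2 ≤ sdim P)
    (hZ : ∀ z, IsVertex (vertexFigure S g c v) z →
      ∃ H, IsFacet (vertexFigure S g c v) H ∧ z ∉ H)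
    (hA : (facetsAt P v).Nonempty) {p : Fin n → ℝ}
    (hpK : ∀ K ∈ facetsAt P v, p ∈ K) : p = v := by
  by_contra hpv
  have hM : IsFace P (⋂₀ facetsAt P v) :=
    IsFace.sInter (h.isPolytope.finite_facetsAt v) hA fun K hK => hK.1.1
  have hvM : v ∈ ⋂₀ facetsAt P v := fun K hK => hK.2
  have hMv : ⋂₀ facetsAt P v ≠ {v} := fun hMv => hpv (hMv ▸ hpK : p ∈ ({v} : Set _))
  obtain ⟨z, hz, hzM, -⟩ := (h.isFace_toFigure hM hvM).exists_isVertex_notMem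
    (isPolytope_vertexFigure S g c v) convex_empty (h.toFigure_nonempty hM hvM hMv).not_subset_empty
  obtain ⟨H, hH, hzH⟩ := hZ z hz
  obtain ⟨K, hK, rfl⟩ := (h.bijOn_toFigure_facetsAt hP).surjOn hH
  exact hzH (toFigure_mono (sInter_subset_of_mem hK) hzM)

end VertexFigure.Exposes

theorem sdim_le_ncard_facetsAt_and_eq_of_forall_mem (D : ℕ) :
    ∀ P : Set (Fin n → ℝ), IsPolytope P → sdim P = D → ∀ w, IsVertex P w →
      D ≤ (facetsAt P w).ncard ∧ ∀ p ∈ P, (∀ K ∈ facetsAt P w, p ∈ K) → p = w := by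
  induction D using Nat.strong_induction_on with
  | _ D IH =>
  intro P hP hdim w hw
  rcases lt_trichotomy D 1 with hD | rfl | hD
  · exact ⟨by omega, fun p hp _ => subsingleton_of_sdim_eq_zero (by omega) hp hw.mem⟩
  · have hwK : {w} ∈ facetsAt P w := ⟨hw.isFacet_singleton hdim, rfl⟩
    exact ⟨(ncard_pos (hP.finite_facetsAt w)).2 ⟨_, hwK⟩,
      fun p _ hpK => hpK _ hwK⟩
  obtain ⟨S, g, c, h⟩ := exists_exposes hP hw
  have hZ := isPolytope_vertexFigure S g c w
  have hZdim := h.sdim_vertexFigure (by omega)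
  have IHZ := IH _ (by omega) _ hZ rfl
  have hZcut : ∀ z, IsVertex (vertexFigure S g c w) z →
      ∃ H, IsFacet (vertexFigure S g c w) H ∧ z ∉ H :=
    fun z hz => exists_isFacet_notMem_of_forall_eq hZ (by omega) (fun z hz => (IHZ z hz).2) hz
  have hcard : D ≤ (facetsAt P w).ncard := by
    obtain ⟨z, hz, -⟩ :=
      hZ.exists_isVertex_notMem convex_empty (nonempty_of_sdim_pos (by omega)).not_subset_empty
    have := succ_sdim_le_ncard_setOf_isFacet hZ (IHZ z hz).1 (hZcut z hz)
    rw [← (h.bijOn_toFigure_facetsAt (by omega)).ncard_eq] at this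
    omega
  exact ⟨hcard, fun p _ hpK => h.eq_of_forall_facetsAt_mem (by omega) hZcut
    (nonempty_of_ncard_ne_zero (by omega)) hpK⟩

theorem IsVertex.sdim_le_ncard_facetsAt (hP : IsPolytope P) (hv : IsVertex P v) :
    sdim P ≤ (facetsAt P v).ncard :=
  (sdim_le_ncard_facetsAt_and_eq_of_forall_mem _ P hP rfl v hv).1

theorem IsVertex.eq_of_forall_facetsAt_mem (hP : IsPolytope P) (hv : IsVertex P v)
    {p : Fin n → ℝ} (hp : p ∈ P) (hpK : ∀ K ∈ facetsAt P v, p ∈ K) : p = v :=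
  (sdim_le_ncard_facetsAt_and_eq_of_forall_mem _ P hP rfl v hv).2 p hp hpK

theorem IsVertex.exists_isFacet_notMem (hP : IsPolytope P) (hP₁ : 1 ≤ sdim P)
    (hv : IsVertex P v) : ∃ K, IsFacet P K ∧ v ∉ K :=
  exists_isFacet_notMem_of_forall_eq hP hP₁ (fun _ hw _ hp => hw.eq_of_forall_facetsAt_mem hP hp) hv

end FacetsAtVertex

section FewFacets

variable {n : ℕ} {P K : Set (Fin n → ℝ)} {v y₁ y₂ : Fin n → ℝ}

theorem facetsAt_eq_sdiff_singleton (hP : IsPolytope P)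
    (hcard : {K | IsFacet P K}.ncard = sdim P + 1) (hv : IsVertex P v) (hK : IsFacet P K)
    (hvK : v ∉ K) : facetsAt P v = {K | IsFacet P K} \ {K} := by
  refine eq_of_subset_of_ncard_le (fun K' hK' => ⟨hK'.1, fun h => hvK (h ▸ hK'.2)⟩) ?_
    (hP.finite_setOf_isFacet.subset sdiff_subset)
  rw [ncard_sdiff_singleton_of_mem (s := {K | IsFacet P K}) hK, hcard]
  exact hv.sdim_le_ncard_facetsAt hP

theorem eq_of_isVertex_notMem_isFacet (hP : IsPolytope P)
    (hcard : {K | IsFacet P K}.ncard = sdim P + 1) (hy₁ : IsVertex P y₁) (hy₂ : IsVertex P y₂)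
    (hK : IsFacet P K) (hy₁K : y₁ ∉ K) (hy₂K : y₂ ∉ K) : y₁ = y₂ :=
  hy₂.eq_of_forall_facetsAt_mem hP hy₁.mem fun K' hK' => by
    rw [facetsAt_eq_sdiff_singleton hP hcard hy₂ hK hy₂K,
      ← facetsAt_eq_sdiff_singleton hP hcard hy₁ hK hy₁K] at hK'
    exact hK'.2

theorem ncard_facetsAt_eq (hP : IsPolytope P) (hcard : {K | IsFacet P K}.ncard = sdim P + 1)
    (hP₁ : 1 ≤ sdim P) (hv : IsVertex P v) : (facetsAt P v).ncard = sdim P := by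
  obtain ⟨K, hK, hvK⟩ := hv.exists_isFacet_notMem hP hP₁
  rw [facetsAt_eq_sdiff_singleton hP hcard hv hK hvK,
    ncard_sdiff_singleton_of_mem (s := {K | IsFacet P K}) hK, hcard, Nat.add_sub_cancel]

end FewFacets

section SimplePolytope

variable {n : ℕ} {P E F : Set (Fin n → ℝ)} {v : Fin n → ℝ}

theorem VertexFigure.Exposes.ncard_setOf_isFacet_vertexFigure {S : Finset (Fin n → ℝ)}
    {g : (Fin n → ℝ) →ₗ[ℝ] ℝ} {c : ℝ} (h : Exposes P S g c v) (hs : IsSimplePolytope P)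
    (hP : 2 ≤ sdim P) :
    {H | IsFacet (vertexFigure S g c v) H}.ncard = sdim (vertexFigure S g c v) + 1 := by
  rw [← (h.bijOn_toFigure_facetsAt hP).ncard_eq, ← h.sdim_vertexFigure (by omega)]
  exact hs v h.isVertex

theorem IsSimplePolytope.ncard_setOf_isFacet_superset (hP : IsPolytope P)
    (hs : IsSimplePolytope P) (h2 : 2 ≤ sdim P) (hE : IsEdge P E) :
    {K | IsFacet P K ∧ E ⊆ K}.ncard + 1 = sdim P := by
  obtain ⟨v, hv, hvE, -⟩ := hE.1.exists_isVertex_notMem hP convex_empty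
    (nonempty_of_sdim_pos (hE.2 ▸ one_pos)).not_subset_empty
  obtain ⟨S, g, c, h⟩ := exists_exposes hP hv
  obtain ⟨y, hy, rfl⟩ := h.exists_eq_ofFigure_of_isEdge hE hvE
  have hbij := h.bijOn_toFigure_facetsAt h2
  have hZ := isPolytope_vertexFigure S g c v
  have hcard := h.ncard_setOf_isFacet_vertexFigure hs h2
  have hdim := h.sdim_vertexFigure (by omega)
  have hset : {K | IsFacet P K ∧ ofFigure S g c v {y} ⊆ K} =
      facetsAt P v ∩ toFigure S g c v ⁻¹' facetsAt (vertexFigure S g c v) y := by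
    ext K
    constructor
    · rintro ⟨hK, hEK⟩
      have hvK : v ∈ K := hEK mem_ofFigure
      exact ⟨⟨hK, hvK⟩, hbij.mapsTo ⟨hK, hvK⟩,
        toFigure_mono hEK (by rw [h.toFigure_ofFigure hy]; rfl)⟩
    · rintro ⟨⟨hK, hvK⟩, -, hyK⟩
      exact ⟨hK, h.ofFigure_toFigure hK.1 hvK ▸ ofFigure_mono (singleton_subset_iff.2 hyK)⟩
  rw [hset, (hbij.subset_right fun H hH => hH.1).ncard_eq, ncard_facetsAt_eq hZ hcard (by omega) hy]
  omega

theorem IsSimplePolytope.existsUnique_adjacent_notMem (hP : IsPolytope P)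
    (hs : IsSimplePolytope P) (h2 : 2 ≤ sdim P) (hv : IsVertex P v) (hF : IsFacet P F)
    (hvF : v ∈ F) : ∃! x, IsVertex P x ∧ Adjacent P v x ∧ x ∉ F := by
  obtain ⟨S, g, c, h⟩ := exists_exposes hP hv
  have hZ := isPolytope_vertexFigure S g c v
  have hcard := h.ncard_setOf_isFacet_vertexFigure hs h2
  have hKF : IsFacet (vertexFigure S g c v) (toFigure S g c v F) :=
    (h.bijOn_toFigure_facetsAt h2).mapsTo ⟨hF, hvF⟩
  have hmem : ∀ x y, IsVertex P x → x ≠ v → x ∈ ofFigure S g c v {y} →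
      IsVertex (vertexFigure S g c v) y → (y ∈ toFigure S g c v F ↔ x ∈ F) := by
    intro x y hx hxv hxE hy
    have hxS := hx.mem_of_eq_convexHull h.eq_convexHull
    rw [← h.proj_mem_toFigure_iff hF.1 hvF hxS hxv, (h.mem_ofFigure_iff hy hxS hxv).1 hxE]
  obtain ⟨y, hy, hyF⟩ := hZ.exists_isVertex_notMem (hKF.1.convex hZ) fun hZF => by
    have := sdim_mono hZF
    have := hKF.2.2
    omega
  have hE := h.isEdge_ofFigure hy
  obtain ⟨x, ⟨hx, hxE, hxv⟩, hx_unique⟩ := hE.existsUnique_isVertex_ne hP hv mem_ofFigure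
  refine ⟨x, ⟨hx, ⟨hxv.symm, _, hE, mem_ofFigure, hxE⟩, fun hxF => hyF ?_⟩, ?_⟩
  · exact (hmem x y hx hxv hxE hy).2 hxF
  rintro x' ⟨hx', ⟨hvx', E', hE', hvE', hx'E'⟩, hx'F⟩
  obtain ⟨y', hy', rfl⟩ := h.exists_eq_ofFigure_of_isEdge hE' hvE'
  have hy'F : y' ∉ toFigure S g c v F := fun hy'F =>
    hx'F ((hmem x' y' hx' hvx'.symm hx'E' hy').1 hy'F)
  obtain rfl := eq_of_isVertex_notMem_isFacet hZ hcard hy' hy hKF hy'F hyF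
  exact hx_unique x' ⟨hx', hx'E', hvx'.symm⟩

end SimplePolytope

theorem stmt5_general {n d : ℕ} (hd : 1 < d) (P : Set (Fin n → ℝ))
    (hP : IsPolytope P) (hdim : sdim P = d) (hsimple : IsSimplePolytope P)
    (u v : Fin n → ℝ) (hv : IsVertex P v)
    (F : Set (Fin n → ℝ)) (hF : IsFacet P F) (hvF : v ∈ F)
    (huniq : ∀ G, IsFacet P G → u ∈ G → v ∈ G → G = F) :
    (∃! x, IsVertex P x ∧ Adjacent P v x ∧ x ∉ F) ∧
    (∀ x, IsVertex P x → Adjacent P v x → x ∉ F →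
      {G | IsFacet P G ∧ u ∈ G ∧ x ∈ G}.ncard ≤ 1 ∧
      ¬ ∃ G, IsFacet P G ∧ u ∈ G ∧ v ∈ G ∧ x ∈ G) := by
  have h2 : 2 ≤ sdim P := hdim ▸ hd
  refine ⟨hsimple.existsUnique_adjacent_notMem hP h2 hv hF hvF, fun x hx hadj hxF => ?_⟩
  have hnot : ¬ ∃ G, IsFacet P G ∧ u ∈ G ∧ v ∈ G ∧ x ∈ G := fun ⟨G, hG, huG, hvG, hxG⟩ =>
    hxF (huniq G hG huG hvG ▸ hxG)
  refine ⟨?_, hnot⟩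
  obtain ⟨-, E, hE, hvE, hxE⟩ := hadj
  -- of the `d` facets through `x`, `d - 1` contain the edge `vx`, and none of these contains `u`
  have hdisj : Disjoint {G | IsFacet P G ∧ u ∈ G ∧ x ∈ G} {G | IsFacet P G ∧ E ⊆ G} :=
    disjoint_left.2 fun G ⟨hG, huG, hxG⟩ ⟨_, hEG⟩ => hnot ⟨G, hG, huG, hEG hvE, hxG⟩
  have hsub : {G | IsFacet P G ∧ u ∈ G ∧ x ∈ G} ∪ {G | IsFacet P G ∧ E ⊆ G} ⊆ facetsAt P x :=
    union_subset (fun G ⟨hG, _, hxG⟩ => ⟨hG, hxG⟩) fun G ⟨hG, hEG⟩ => ⟨hG, hEG hxE⟩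
  have hfin := hP.finite_setOf_isFacet
  have := ncard_union_eq hdisj (hfin.subset fun _ hG => hG.1) (hfin.subset fun _ hG => hG.1)
  have := ncard_le_ncard hsub (hP.finite_facetsAt x)
  have : (facetsAt P x).ncard = sdim P := hsimple x hx
  have := hsimple.ncard_setOf_isFacet_superset hP h2 hE
  omega

theorem stmt5 {n d : ℕ} (hd : 1 < d) (P : Set (Fin n → ℝ))
    (hP : IsPolytope P) (hdim : sdim P = d) (hsimple : IsSimplePolytope P)
    (u v : Fin n → ℝ) (hu : IsVertex P u) (hv : IsVertex P v)
    (F : Set (Fin n → ℝ)) (hF : IsFacet P F) (huF : u ∈ F) (hvF : v ∈ F)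
    (huniq : ∀ G, IsFacet P G → u ∈ G → v ∈ G → G = F) :
    (∃! x, IsVertex P x ∧ Adjacent P v x ∧ x ∉ F) ∧
    (∀ x, IsVertex P x → Adjacent P v x → x ∉ F →
      {G | IsFacet P G ∧ u ∈ G ∧ x ∈ G}.ncard ≤ 1 ∧
      ¬ ∃ G, IsFacet P G ∧ u ∈ G ∧ v ∈ G ∧ x ∈ G) :=
  stmt5_general hd P hP hdim hsimple u v hv F hF hvF huniq
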